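/- arXiv:1812.07447 — 2 statements merged into one kernel-verified Lean document; each statement's English description precedes it below -/
import Mathlib

section
/- Let A be a self-adjoint operator on H which is √G-bounded. Then for every p ∈ [0,1) the operator |A|^p (defined via the spectral calculus of A) is √G-infinitesimal, and ‖A^p‖^G_E ≤ (‖A‖^G_E)^p for every E>0. -/
/-! # Common infrastructure for formalizing
"Energy-constrained diamond norms and quantum dynamical semigroups"
(Shirokov–Holevo).

Trace-class operators on a Hilbert space `H` are modelled as bounded operators
with finite trace norm, the trace norm being given by its variational
characterization over finite orthonormal systems.  Unbounded positive operators
`G` are modelled through their quadratic forms `φ ↦ ‖√G φ‖²` (with value `∞`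
off the form domain); discrete operators are given concretely by an
orthonormal eigenbasis and eigenvalues.  The Hilbert tensor product
`H_A ⊗ H_R` is modelled by a Hilbert space `HAR` together with a bilinear map
satisfying the characteristic inner-product identity and totality. -/

noncomputable section

open scoped ENNReal
open ContinuousLinearMap MeasureTheory Filter Topology

/-- The rank-one operator `|x⟩⟨y|`. -/
def rankOne {H : Type*} [NormedAddCommGroup H] [InnerProductSpace ℂ H] [CompleteSpace H]
    (x y : H) : H →L[ℂ] H :=
  (InnerProductSpace.toDual ℂ H y).smulRight x

/-- The trace norm `‖T‖₁ ∈ [0,∞]` of a bounded operator, via its variational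
characterization as the supremum of `∑ i ‖⟪e i, T (f i)⟫‖` over finite
orthonormal systems `e`, `f`. -/
def traceNorm {H : Type*} [NormedAddCommGroup H] [InnerProductSpace ℂ H] [CompleteSpace H]
    (T : H →L[ℂ] H) : ℝ≥0∞ :=
  ⨆ (n : ℕ) (e : Fin n → H) (f : Fin n → H) (_ : Orthonormal ℂ e) (_ : Orthonormal ℂ f),
    ENNReal.ofReal (∑ i, ‖(inner ℂ (e i) (T (f i)) : ℂ)‖)

/-- A bounded operator is trace class if its trace norm is finite. -/
def IsTraceClass {H : Type*} [NormedAddCommGroup H] [InnerProductSpace ℂ H] [CompleteSpace H]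
    (T : H →L[ℂ] H) : Prop :=
  traceNorm T ≠ ∞

/-- A choice of orthonormal basis index set for `H`. -/
def stdIndex (H : Type*) [NormedAddCommGroup H] [InnerProductSpace ℂ H]
    [CompleteSpace H] : Set H :=
  (exists_hilbertBasis ℂ H).choose

/-- A choice of Hilbert basis of `H`. -/
def stdBasis (H : Type*) [NormedAddCommGroup H] [InnerProductSpace ℂ H]
    [CompleteSpace H] : HilbertBasis (stdIndex H) ℂ H :=
  (exists_hilbertBasis ℂ H).choose_spec.choose

/-- The trace of an operator (meaningful on trace-class operators; junk value
otherwise). -/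
def opTrace {H : Type*} [NormedAddCommGroup H] [InnerProductSpace ℂ H] [CompleteSpace H]
    (T : H →L[ℂ] H) : ℂ :=
  ∑' i : stdIndex H, (inner ℂ (stdBasis H i) (T (stdBasis H i)) : ℂ)

/-- A state: a positive operator of unit trace (equivalently, of unit trace
norm). -/
def IsState {H : Type*} [NormedAddCommGroup H] [InnerProductSpace ℂ H] [CompleteSpace H]
    (ρ : H →L[ℂ] H) : Prop :=
  ρ.IsPositive ∧ traceNorm ρ = 1

/-- A pure state: a rank-one orthogonal projection. -/
def IsPureState {H : Type*} [NormedAddCommGroup H] [InnerProductSpace ℂ H] [CompleteSpace H]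
    (ρ : H →L[ℂ] H) : Prop :=
  ∃ z : H, ‖z‖ = 1 ∧ ρ = rankOne z z

/-- The quadratic form `φ ↦ ‖√G φ‖²` (value `∞` off the form domain) of a
densely defined positive self-adjoint operator `G`.  Closed nonnegative densely
defined quadratic forms correspond exactly to positive self-adjoint operators,
so this structure is a faithful encoding of such an operator. -/
structure PosForm (H : Type*) [NormedAddCommGroup H] [InnerProductSpace ℂ H] where
  /-- the quadratic form `φ ↦ ‖√G φ‖²` -/
  q : H → ℝ≥0∞
  q_smul : ∀ (c : ℂ) (φ : H), q (c • φ) = ENNReal.ofReal (‖c‖ ^ 2) * q φ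
  q_parallelogram : ∀ φ ψ : H, q (φ + ψ) + q (φ - ψ) = 2 * q φ + 2 * q ψ
  q_denseDomain : Dense {φ : H | q φ ≠ ∞}
  q_lsc : LowerSemicontinuous q

/-- The quadratic form of the discrete operator `G = ∑ₖ Eₖ |τₖ⟩⟨τₖ|`, namely
`φ ↦ ‖√G φ‖² = ∑ₖ Eₖ |⟨τₖ, φ⟩|²`. -/
def discreteForm {H : Type*} [NormedAddCommGroup H] [InnerProductSpace ℂ H]
    (τ : ℕ → H) (Ek : ℕ → ℝ) : H → ℝ≥0∞ :=
  fun φ => ∑' k, ENNReal.ofReal (Ek k) * ENNReal.ofReal (‖(inner ℂ (τ k) φ : ℂ)‖ ^ 2)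

/-- The data `(τ, Ek)` describes a discrete (positive, unbounded, with discrete
spectrum of finite multiplicity) operator `G = ∑ₖ Eₖ |τₖ⟩⟨τₖ|`: `τ` is an
orthonormal basis and the eigenvalue sequence is nonnegative, nondecreasing and
tends to `+∞`. -/
structure IsDiscreteOperator {H : Type*} [NormedAddCommGroup H] [InnerProductSpace ℂ H]
    (τ : ℕ → H) (Ek : ℕ → ℝ) : Prop where
  orthonormal : Orthonormal ℂ τ
  total : (Submodule.span ℂ (Set.range τ)).topologicalClosure = ⊤
  nonneg : 0 ≤ Ek 0
  mono : Monotone Ek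
  tendsto_top : Tendsto Ek atTop atTop

/-- The energy `Tr ρ G` of a positive (trace-class) operator `ρ`, expressed via
(the common value over) decompositions `ρ = ∑ᵢ |φᵢ⟩⟨φᵢ|` as `∑ᵢ ‖√G φᵢ‖²`,
where the form `q` is `φ ↦ ‖√G φ‖²`. -/
def energy {H : Type*} [NormedAddCommGroup H] [InnerProductSpace ℂ H] [CompleteSpace H]
    (q : H → ℝ≥0∞) (ρ : H →L[ℂ] H) : ℝ≥0∞ :=
  ⨆ (φ : ℕ → H) (_ : ρ = ∑' i, rankOne (φ i) (φ i)), ∑' i, q (φ i)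

/-- `A` satisfies the relative bound `‖Aφ‖² ≤ a²‖φ‖² + b²‖√G φ‖²` on the domain
of `√G` (`q` is the form of `G`). -/
def SqrtRelBoundWith {H : Type*} [NormedAddCommGroup H] [InnerProductSpace ℂ H]
    (q : H → ℝ≥0∞) (A : H → H) (a b : ℝ) : Prop :=
  ∀ φ : H, q φ ≠ ∞ →
    ENNReal.ofReal (‖A φ‖ ^ 2) ≤
      ENNReal.ofReal (a ^ 2) * ENNReal.ofReal (‖φ‖ ^ 2) + ENNReal.ofReal (b ^ 2) * q φ

/-- `A` is `√G`-bounded. -/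
def SqrtBounded {H : Type*} [NormedAddCommGroup H] [InnerProductSpace ℂ H]
    (q : H → ℝ≥0∞) (A : H → H) : Prop :=
  ∃ a b : ℝ, 0 ≤ a ∧ 0 ≤ b ∧ SqrtRelBoundWith q A a b

/-- `A` is `√G`-infinitesimal (its `√G`-bound is zero). -/
def SqrtInfinitesimal {H : Type*} [NormedAddCommGroup H] [InnerProductSpace ℂ H]
    (q : H → ℝ≥0∞) (A : H → H) : Prop :=
  ∀ b : ℝ, 0 < b → ∃ a : ℝ, 0 ≤ a ∧ SqrtRelBoundWith q A a b

/-- The operator E-norm `‖A‖^G_E`: the supremum over finite-rank states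
`ρ = ∑ᵢ|φᵢ⟩⟨φᵢ|` with `Tr ρ G ≤ E` of `√(∑ᵢ ‖Aφᵢ‖²)`. -/
def eNorm {H : Type*} [NormedAddCommGroup H] [InnerProductSpace ℂ H]
    (q : H → ℝ≥0∞) (A : H → H) (E : ℝ) : ℝ≥0∞ :=
  ⨆ (n : ℕ) (φ : Fin n → H) (_ : ∑ i, ‖φ i‖ ^ 2 = 1)
    (_ : ∑ i, q (φ i) ≤ ENNReal.ofReal E),
    ENNReal.ofReal (Real.sqrt (∑ i, ‖A (φ i)‖ ^ 2))

/-- A Hilbert space tensor product structure: `HAR` realizes `HA ⊗ HR` via a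
bilinear map with the characteristic inner product identity and total range. -/
structure TensorStruct (HA HR HAR : Type*)
    [NormedAddCommGroup HA] [InnerProductSpace ℂ HA] [CompleteSpace HA]
    [NormedAddCommGroup HR] [InnerProductSpace ℂ HR] [CompleteSpace HR]
    [NormedAddCommGroup HAR] [InnerProductSpace ℂ HAR] [CompleteSpace HAR] where
  /-- the tensor map `(a, b) ↦ a ⊗ b` -/
  tmul : HA →L[ℂ] HR →L[ℂ] HAR
  inner_tmul : ∀ (a a' : HA) (b b' : HR),
    (inner ℂ (tmul a b) (tmul a' b') : ℂ) = (inner ℂ a a' : ℂ) * (inner ℂ b b' : ℂ)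
  total : (Submodule.span ℂ {z : HAR | ∃ a b, z = tmul a b}).topologicalClosure = ⊤

namespace TensorStruct

variable {HA HR HAR : Type*}
  [NormedAddCommGroup HA] [InnerProductSpace ℂ HA] [CompleteSpace HA]
  [NormedAddCommGroup HR] [InnerProductSpace ℂ HR] [CompleteSpace HR]
  [NormedAddCommGroup HAR] [InnerProductSpace ℂ HAR] [CompleteSpace HAR]

/-- The isometry `a ↦ a ⊗ b` (for a fixed `b`). -/
def embR (ts : TensorStruct HA HR HAR) (b : HR) : HA →L[ℂ] HAR :=
  ts.tmul.flip b

/-- The isometry `b ↦ a ⊗ b` (for a fixed `a`). -/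
def embA (ts : TensorStruct HA HR HAR) (a : HA) : HR →L[ℂ] HAR :=
  ts.tmul a

/-- The partial trace over `R` of a (trace-class) operator on `HA ⊗ HR`:
`ρ_A = ∑ⱼ (I ⊗ ⟨fⱼ|) ρ (I ⊗ |fⱼ⟩)` for an orthonormal basis `(fⱼ)` of `HR`. -/
def ptraceR (ts : TensorStruct HA HR HAR) (ρ : HAR →L[ℂ] HAR) : HA →L[ℂ] HA :=
  ∑' j : stdIndex HR,
    (ContinuousLinearMap.adjoint (ts.embR (stdBasis HR j))) ∘L ρ ∘L ts.embR (stdBasis HR j)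

/-- The partial trace over `A` of a (trace-class) operator on `HA ⊗ HR`. -/
def ptraceA (ts : TensorStruct HA HR HAR) (ρ : HAR →L[ℂ] HAR) : HR →L[ℂ] HR :=
  ∑' i : stdIndex HA,
    (ContinuousLinearMap.adjoint (ts.embA (stdBasis HA i))) ∘L ρ ∘L ts.embA (stdBasis HA i)

end TensorStruct

/-- Superoperators: linear transformations of the space of operators
(the relevant domain being the trace-class operators). -/
abbrev Superop (H : Type*) [NormedAddCommGroup H] [InnerProductSpace ℂ H] :=
  Module.End ℂ (H →L[ℂ] H)

/-- `ΦR` is (a linear extension of) the superoperator `Φ ⊗ id_R`: on operators of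
finite Schmidt rank built from finite-energy vectors it is given by the canonical
formula `Φ ⊗ id_R (∑_{ij} |φᵢ⊗ψᵢ⟩⟨φⱼ⊗ψⱼ|) = ∑_{ij} (1⊗|ψᵢ⟩) Φ(|φᵢ⟩⟨φⱼ|) (1⊗⟨ψⱼ|)`. -/
def ExtendsTensor {HA HR HAR : Type*}
    [NormedAddCommGroup HA] [InnerProductSpace ℂ HA] [CompleteSpace HA]
    [NormedAddCommGroup HR] [InnerProductSpace ℂ HR] [CompleteSpace HR]
    [NormedAddCommGroup HAR] [InnerProductSpace ℂ HAR] [CompleteSpace HAR]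
    (ts : TensorStruct HA HR HAR) (q : HA → ℝ≥0∞)
    (Φ : Superop HA) (ΦR : Superop HAR) : Prop :=
  ∀ (n : ℕ) (φ : Fin n → HA) (ψ : Fin n → HR), (∀ i, q (φ i) ≠ ∞) →
    ΦR (∑ i, ∑ j, rankOne (ts.tmul (φ i) (ψ i)) (ts.tmul (φ j) (ψ j))) =
      ∑ i, ∑ j, ts.embR (ψ i) ∘L Φ (rankOne (φ i) (φ j)) ∘L
        ContinuousLinearMap.adjoint (ts.embR (ψ j))

/-- The energy-constrained diamond norm `‖Φ‖^G_{⋄,E}` of a superoperator `Φ`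
whose tensor extension `Φ ⊗ id_R` is `ΦR`; `q` is the form of `G`. -/
def ecdNorm {HA HR HAR : Type*}
    [NormedAddCommGroup HA] [InnerProductSpace ℂ HA] [CompleteSpace HA]
    [NormedAddCommGroup HR] [InnerProductSpace ℂ HR] [CompleteSpace HR]
    [NormedAddCommGroup HAR] [InnerProductSpace ℂ HAR] [CompleteSpace HAR]
    (ts : TensorStruct HA HR HAR) (q : HA → ℝ≥0∞)
    (ΦR : Superop HAR) (E : ℝ) : ℝ≥0∞ :=
  ⨆ (ρ : HAR →L[ℂ] HAR) (_ : IsState ρ)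
    (_ : energy q (ts.ptraceR ρ) ≤ ENNReal.ofReal E),
    traceNorm (ΦR ρ)

/-- Complete positivity of a superoperator. -/
def IsCompletelyPositive {H : Type*} [NormedAddCommGroup H] [InnerProductSpace ℂ H]
    [CompleteSpace H] (Φ : Superop H) : Prop :=
  ∀ (n : ℕ) (A : Fin n → (H →L[ℂ] H)) (ξ : Fin n → H),
    0 ≤ (∑ i, ∑ j,
      (inner ℂ (ξ i) ((Φ ((ContinuousLinearMap.adjoint (A i)) ∘L (A j))) (ξ j)) : ℂ)).re ∧
    (∑ i, ∑ j,
      (inner ℂ (ξ i) ((Φ ((ContinuousLinearMap.adjoint (A i)) ∘L (A j))) (ξ j)) : ℂ)).im = 0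

/-- A quantum channel: a completely positive trace preserving superoperator. -/
def IsChannel {H : Type*} [NormedAddCommGroup H] [InnerProductSpace ℂ H]
    [CompleteSpace H] (Φ : Superop H) : Prop :=
  IsCompletelyPositive Φ ∧ ∀ ρ : H →L[ℂ] H, IsTraceClass ρ → opTrace (Φ ρ) = opTrace ρ

/-- A (strongly continuous) quantum dynamical semigroup. -/
structure IsQDS {H : Type*} [NormedAddCommGroup H] [InnerProductSpace ℂ H]
    [CompleteSpace H] (Φ : ℝ → Superop H) : Prop where
  channel : ∀ t : ℝ, 0 ≤ t → IsChannel (Φ t)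
  map_zero : Φ 0 = 1
  semigroup : ∀ s t : ℝ, 0 ≤ s → 0 ≤ t → Φ (s + t) = Φ s * Φ t
  strong_continuity : ∀ ρ : H →L[ℂ] H, IsTraceClass ρ →
    Tendsto (fun t => traceNorm (Φ t ρ - ρ)) (𝓝[>] (0 : ℝ)) (𝓝 0)

/-- `X` is the value at `ρ` of the generator of the semigroup `Φ`, i.e.
`t⁻¹(Φ_t ρ - ρ) → X` in trace norm as `t → 0⁺`; in particular `ρ` belongs to
the domain of the generator. -/
def IsGeneratorAt {H : Type*} [NormedAddCommGroup H] [InnerProductSpace ℂ H]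
    [CompleteSpace H] (Φ : ℝ → Superop H) (ρ X : H →L[ℂ] H) : Prop :=
  Tendsto (fun t : ℝ => traceNorm (((t : ℂ))⁻¹ • (Φ t ρ - ρ) - X)) (𝓝[>] (0 : ℝ)) (𝓝 0)

/-- `f E = o(g E)` as `E → +∞`, for `f` with values in `[0,∞]`. -/
def IsLittleOAtTop (f : ℝ → ℝ≥0∞) (g : ℝ → ℝ) : Prop :=
  ∀ c : ℝ, 0 < c → ∀ᶠ E in atTop, f E ≤ ENNReal.ofReal (c * g E)

/-- Pointwise trace-norm continuity of a superoperator on a set of operators. -/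
def ContinuousOnTN {H H' : Type*}
    [NormedAddCommGroup H] [InnerProductSpace ℂ H] [CompleteSpace H]
    [NormedAddCommGroup H'] [InnerProductSpace ℂ H'] [CompleteSpace H']
    (F : (H →L[ℂ] H) → (H' →L[ℂ] H')) (s : Set (H →L[ℂ] H)) : Prop :=
  ∀ ρ ∈ s, ∀ δ : ℝ, 0 < δ → ∃ ε : ℝ, 0 < ε ∧ ∀ σ ∈ s,
    traceNorm (ρ - σ) ≤ ENNReal.ofReal ε → traceNorm (F ρ - F σ) ≤ ENNReal.ofReal δ

/-- Uniform trace-norm continuity of a superoperator on a set of operators. -/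
def UniformContinuousOnTN {H H' : Type*}
    [NormedAddCommGroup H] [InnerProductSpace ℂ H] [CompleteSpace H]
    [NormedAddCommGroup H'] [InnerProductSpace ℂ H'] [CompleteSpace H']
    (F : (H →L[ℂ] H) → (H' →L[ℂ] H')) (s : Set (H →L[ℂ] H)) : Prop :=
  ∀ δ : ℝ, 0 < δ → ∃ ε : ℝ, 0 < ε ∧ ∀ ρ ∈ s, ∀ σ ∈ s,
    traceNorm (ρ - σ) ≤ ENNReal.ofReal ε → traceNorm (F ρ - F σ) ≤ ENNReal.ofReal δ

/-- The set of pure states on `HA ⊗ HR` with `Tr ρ_A G ≤ E`. -/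
def pureEnergySet {HA HR HAR : Type*}
    [NormedAddCommGroup HA] [InnerProductSpace ℂ HA] [CompleteSpace HA]
    [NormedAddCommGroup HR] [InnerProductSpace ℂ HR] [CompleteSpace HR]
    [NormedAddCommGroup HAR] [InnerProductSpace ℂ HAR] [CompleteSpace HAR]
    (ts : TensorStruct HA HR HAR) (q : HA → ℝ≥0∞) (E : ℝ) : Set (HAR →L[ℂ] HAR) :=
  {ρ | IsPureState ρ ∧ energy q (ts.ptraceR ρ) ≤ ENNReal.ofReal E}

/-- The set of positive operators `ρ` on `HA ⊗ HR` with `Tr ρ ≤ 1` and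
`Tr ρ_A G ≤ E`. -/
def subStateEnergySet {HA HR HAR : Type*}
    [NormedAddCommGroup HA] [InnerProductSpace ℂ HA] [CompleteSpace HA]
    [NormedAddCommGroup HR] [InnerProductSpace ℂ HR] [CompleteSpace HR]
    [NormedAddCommGroup HAR] [InnerProductSpace ℂ HAR] [CompleteSpace HAR]
    (ts : TensorStruct HA HR HAR) (q : HA → ℝ≥0∞) (E : ℝ) : Set (HAR →L[ℂ] HAR) :=
  {ρ | ρ.IsPositive ∧ traceNorm ρ ≤ 1 ∧ energy q (ts.ptraceR ρ) ≤ ENNReal.ofReal E}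


/-- The quadratic form of `G ⊗ I_R` on `HA ⊗ HR`, for a discrete operator
`G = ∑ₖ Eₖ|τₖ⟩⟨τₖ|`:  `‖√(G⊗I) z‖² = ∑ₖ Eₖ ‖(⟨τₖ|⊗I) z‖²`. -/
def TensorStruct.tensorForm {HA HR HAR : Type*}
    [NormedAddCommGroup HA] [InnerProductSpace ℂ HA] [CompleteSpace HA]
    [NormedAddCommGroup HR] [InnerProductSpace ℂ HR] [CompleteSpace HR]
    [NormedAddCommGroup HAR] [InnerProductSpace ℂ HAR] [CompleteSpace HAR]
    (ts : TensorStruct HA HR HAR) (τ : ℕ → HA) (Ek : ℕ → ℝ) : HAR → ℝ≥0∞ :=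
  fun z => ∑' k, ENNReal.ofReal (Ek k) *
    ENNReal.ofReal (‖(ContinuousLinearMap.adjoint (ts.embA (τ k))) z‖ ^ 2)

/-- The quantity `‖{V_k}‖^G_E`: the supremum over states `ρ = ∑ᵢ|φᵢ⟩⟨φᵢ|` with
`Tr ρ G ≤ E` of `∑ₖ Tr V_k ρ V_k*`. -/
def familyENorm {H : Type*} [NormedAddCommGroup H] [InnerProductSpace ℂ H]
    (q : H → ℝ≥0∞) (V : ℕ → H → H) (E : ℝ) : ℝ≥0∞ :=
  ⨆ (φ : ℕ → H) (_ : (∑' i, ENNReal.ofReal (‖φ i‖ ^ 2)) = 1)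
    (_ : (∑' i, q (φ i)) ≤ ENNReal.ofReal E),
    ∑' k, ∑' i, ENNReal.ofReal (‖V k (φ i)‖ ^ 2)

/-- The superoperator `ρ ↦ u ρ u*` of conjugation by `u`. -/
def conjSuper {H : Type*} [NormedAddCommGroup H] [InnerProductSpace ℂ H] [CompleteSpace H]
    (u : H →L[ℂ] H) : Superop H where
  toFun ρ := u ∘L ρ ∘L (ContinuousLinearMap.adjoint u)
  map_add' ρ σ := by
    simp [ContinuousLinearMap.comp_add, ContinuousLinearMap.add_comp]
  map_smul' c ρ := by
    simp [ContinuousLinearMap.comp_smul, ContinuousLinearMap.smul_comp]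

/-- `U` is the strongly continuous one-parameter unitary group `t ↦ e^{-iAt}`
generated by the self-adjoint operator `A`; by Stone's theorem the domain of
`A` is exactly the set of vectors at which the group is differentiable, and
there the derivative at `0` is `-iAφ`. -/
structure UnitaryGroupOf {H : Type*} [NormedAddCommGroup H] [InnerProductSpace ℂ H]
    [CompleteSpace H] (U : ℝ → H →L[ℂ] H) (A : H → H) : Prop where
  unitary_left : ∀ x : ℝ, U x ∘L ContinuousLinearMap.adjoint (U x) = 1
  unitary_right : ∀ x : ℝ, ContinuousLinearMap.adjoint (U x) ∘L U x = 1
  map_zero : U 0 = 1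
  map_add : ∀ x y : ℝ, U (x + y) = U x ∘L U y
  strong_continuity : ∀ φ : H, Continuous fun x => U x φ
  generator : ∀ φ : H, (∃ ψ : H, HasDerivAt (fun x => U x φ) ψ 0) →
    HasDerivAt (fun x => U x φ) (-(Complex.I • A φ)) 0

/-- `φ` lies in the domain of the generator `A` of the unitary group `U`. -/
def InGroupDomain {H : Type*} [NormedAddCommGroup H] [InnerProductSpace ℂ H]
    [CompleteSpace H] (U : ℝ → H →L[ℂ] H) (φ : H) : Prop :=
  ∃ ψ : H, HasDerivAt (fun x => U x φ) ψ 0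

/-- The Gaussian convolutional semigroup
`Ξ^A_t(ρ) = (2πt)^{-1/2} ∫_ℝ e^{-iAx} ρ e^{iAx} e^{-x²/(2t)} dx`
(Bochner integral), where `U x = e^{-iAx}`. -/
def gaussSemigroup {H : Type*} [NormedAddCommGroup H] [InnerProductSpace ℂ H]
    [CompleteSpace H] (U : ℝ → H →L[ℂ] H) (t : ℝ) (ρ : H →L[ℂ] H) : H →L[ℂ] H :=
  ∫ x : ℝ, (Real.exp (-(x ^ 2) / (2 * t)) / Real.sqrt (2 * Real.pi * t)) •
    (U x ∘L ρ ∘L ContinuousLinearMap.adjoint (U x))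


/-! All the spectral input is read off the measures `μ φ = ⟨φ, P_A(·) φ⟩`.

Splitting at `λ² = c` gives `|λ| ^ (2p) ≤ c ^ p + c ^ (p - 1) λ²` for every `c > 0`; as
`c ^ (p - 1) → 0` when `p < 1`, integrating against `μ φ` shows that `|A| ^ p` is
`A`-infinitesimal, hence `√G`-infinitesimal because `A` is `√G`-bounded.

For a finite-rank state `ρ = ∑ᵢ |φᵢ⟩⟨φᵢ|` the measure `∑ᵢ μ φᵢ` is a probability measure, and
the monotonicity of `Lʳ`-norms in `r` on a probability space (Jensen) gives
`∑ᵢ ‖|A| ^ p φᵢ‖² ≤ (∑ᵢ ‖A φᵢ‖²) ^ p`, whence `‖|A| ^ p‖^G_E ≤ (‖A‖^G_E) ^ p`. -/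

theorem rpow_le_rpow_add_rpow_sub_one_mul {x c p : ℝ} (hx : 0 ≤ x) (hc : 0 < c) (hp0 : 0 ≤ p)
    (hp1 : p ≤ 1) : x ^ p ≤ c ^ p + c ^ (p - 1) * x := by
  rcases le_or_gt x c with hxc | hcx
  · have : x ^ p ≤ c ^ p := Real.rpow_le_rpow hx hxc hp0
    nlinarith [Real.rpow_nonneg hc.le (p - 1)]
  · have hx0 : 0 < x := hc.trans hcx
    calc x ^ p = x ^ (p - 1) * x := by
          rw [Real.rpow_sub_one hx0.ne', div_mul_cancel₀ _ hx0.ne']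
      _ ≤ c ^ (p - 1) * x :=
          mul_le_mul_of_nonneg_right (Real.rpow_le_rpow_of_nonpos hc hcx.le (by linarith)) hx
      _ ≤ c ^ p + c ^ (p - 1) * x := le_add_of_nonneg_left (Real.rpow_nonneg hc.le p)

theorem lintegral_enorm_rpow_le_rpow_lintegral_enorm_rpow {α E : Type*} [MeasurableSpace α]
    [NormedAddCommGroup E] {μ : Measure α} [IsProbabilityMeasure μ] {f : α → E}
    (hf : AEStronglyMeasurable f μ) {r s : ℝ} (hr : 0 ≤ r) (hrs : r ≤ s) :
    ∫⁻ a, ‖f a‖ₑ ^ r ∂μ ≤ (∫⁻ a, ‖f a‖ₑ ^ s ∂μ) ^ (r / s) := by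
  rcases hr.eq_or_lt with rfl | hr
  · simp
  have hs := hr.trans_le hrs
  rw [lintegral_rpow_enorm_eq_rpow_eLpNorm' hr, lintegral_rpow_enorm_eq_rpow_eLpNorm' hs,
    ← ENNReal.rpow_mul, mul_div_cancel₀ _ hs.ne']
  gcongr
  exact eLpNorm'_le_eLpNorm'_of_exponent_le hr hrs μ hf

theorem lintegral_abs_rpow_le (ν : Measure ℝ) {c p : ℝ} (hc : 0 < c) (hp0 : 0 ≤ p)
    (hp1 : p ≤ 1) :
    ∫⁻ l, ENNReal.ofReal (|l| ^ (2 * p)) ∂ν ≤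
      ENNReal.ofReal (c ^ p) * ν Set.univ +
        ENNReal.ofReal (c ^ (p - 1)) * ∫⁻ l, ENNReal.ofReal (l ^ 2) ∂ν := by
  calc ∫⁻ l, ENNReal.ofReal (|l| ^ (2 * p)) ∂ν
      ≤ ∫⁻ l, ENNReal.ofReal (c ^ p) +
          ENNReal.ofReal (c ^ (p - 1)) * ENNReal.ofReal (l ^ 2) ∂ν := by
        refine lintegral_mono fun l => ?_
        rw [← ENNReal.ofReal_mul (Real.rpow_nonneg hc.le _),
          ← ENNReal.ofReal_add (Real.rpow_nonneg hc.le _) (by positivity),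
          Real.rpow_mul (abs_nonneg l), Real.rpow_two, sq_abs]
        exact ENNReal.ofReal_le_ofReal
          (rpow_le_rpow_add_rpow_sub_one_mul (sq_nonneg l) hc hp0 hp1)
    _ = _ := by
        rw [lintegral_add_left measurable_const, lintegral_const,
          lintegral_const_mul _ (by fun_prop)]

theorem lintegral_abs_rpow_ne_top {ν : Measure ℝ} (hν : ν Set.univ ≠ ∞)
    (h2 : ∫⁻ l, ENNReal.ofReal (l ^ 2) ∂ν ≠ ∞) {p : ℝ} (hp0 : 0 ≤ p) (hp1 : p ≤ 1) :
    ∫⁻ l, ENNReal.ofReal (|l| ^ (2 * p)) ∂ν ≠ ∞ :=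
  ne_top_of_le_ne_top (by finiteness) (lintegral_abs_rpow_le ν one_pos hp0 hp1)

section SpectralCalculus

variable {H : Type*} [NormedAddCommGroup H]

/-- `B` is the operator `g(A)` with `|g|² = f`, where `μ φ` is the spectral measure of `A` at
`φ`: its domain is where `∫ f dμ_φ` is finite. -/
def IsSpectralMultiplier (μ : H → Measure ℝ) (f : ℝ → ℝ) (B : H → H) : Prop :=
  ∀ φ : H, (∫⁻ l, ENNReal.ofReal (f l) ∂(μ φ)) ≠ ∞ →
    ENNReal.ofReal (‖B φ‖ ^ 2) = ∫⁻ l, ENNReal.ofReal (f l) ∂(μ φ)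

variable {μ : H → Measure ℝ} (hμ_univ : ∀ φ : H, μ φ Set.univ = ENNReal.ofReal (‖φ‖ ^ 2))
  {A Ap : H → H} {p : ℝ} (hA : IsSpectralMultiplier μ (fun l => l ^ 2) A)
  (hAp : IsSpectralMultiplier μ (fun l => |l| ^ (2 * p)) Ap) (hp0 : 0 ≤ p)
include hμ_univ hA hAp hp0

theorem norm_sq_le_of_isSpectralMultiplier (hp1 : p ≤ 1) {c : ℝ} (hc : 0 < c) {φ : H}
    (hφ : ∫⁻ l, ENNReal.ofReal (l ^ 2) ∂(μ φ) ≠ ∞) :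
    ‖Ap φ‖ ^ 2 ≤ c ^ p * ‖φ‖ ^ 2 + c ^ (p - 1) * ‖A φ‖ ^ 2 := by
  have hle := lintegral_abs_rpow_le (μ φ) hc hp0 hp1
  rw [← hAp φ (lintegral_abs_rpow_ne_top (by simp [hμ_univ]) hφ hp0 hp1), hμ_univ,
    ← hA φ hφ, ← ENNReal.ofReal_mul (Real.rpow_nonneg hc.le _),
    ← ENNReal.ofReal_mul (Real.rpow_nonneg hc.le _),
    ← ENNReal.ofReal_add (by positivity) (by positivity)] at hle
  exact (ENNReal.ofReal_le_ofReal_iff (by positivity)).mp hle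

theorem exists_norm_sq_le_add_mul_of_isSpectralMultiplier (hp1 : p < 1) {ε : ℝ} (hε : 0 < ε) :
    ∃ C, 0 ≤ C ∧ ∀ φ : H, ∫⁻ l, ENNReal.ofReal (l ^ 2) ∂(μ φ) ≠ ∞ →
      ‖Ap φ‖ ^ 2 ≤ C * ‖φ‖ ^ 2 + ε * ‖A φ‖ ^ 2 := by
  -- the threshold `c` with `c ^ (p - 1) = ε`
  have hc : (ε ^ (p - 1)⁻¹) ^ (p - 1) = ε := by
    rw [← Real.rpow_mul hε.le, inv_mul_cancel₀ (by linarith), Real.rpow_one]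
  refine ⟨(ε ^ (p - 1)⁻¹) ^ p, by positivity, fun φ hφ => ?_⟩
  simpa only [hc] using norm_sq_le_of_isSpectralMultiplier hμ_univ hA hAp hp0 hp1.le
    (Real.rpow_pos_of_pos hε (p - 1)⁻¹) hφ

theorem sum_norm_sq_le_rpow_of_isSpectralMultiplier (hp1 : p ≤ 1) {n : ℕ} (φ : Fin n → H)
    (hφ : ∑ i, ‖φ i‖ ^ 2 = 1) (hfin : ∀ i, ∫⁻ l, ENNReal.ofReal (l ^ 2) ∂(μ (φ i)) ≠ ∞) :
    ∑ i, ‖Ap (φ i)‖ ^ 2 ≤ (∑ i, ‖A (φ i)‖ ^ 2) ^ p := by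
  set ν := ∑ i, μ (φ i)
  have : IsProbabilityMeasure ν := ⟨by
    simp only [ν, Measure.coe_finsetSum, Finset.sum_apply, hμ_univ]
    rw [← ENNReal.ofReal_sum_of_nonneg fun i _ => sq_nonneg _, hφ, ENNReal.ofReal_one]⟩
  have hJensen : ∫⁻ l, ENNReal.ofReal (|l| ^ (2 * p)) ∂ν ≤
      (∫⁻ l, ENNReal.ofReal (l ^ 2) ∂ν) ^ p := by
    have h := lintegral_enorm_rpow_le_rpow_lintegral_enorm_rpow (μ := ν)
      aestronglyMeasurable_id (mul_nonneg zero_le_two hp0) (by linarith : 2 * p ≤ 2)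
    simp_rw [Real.enorm_eq_ofReal_abs, id, ENNReal.ofReal_rpow_of_nonneg (abs_nonneg _)
      (mul_nonneg zero_le_two hp0)] at h
    simpa [← ENNReal.ofReal_pow (abs_nonneg _)] using h
  have hAp_sum : ENNReal.ofReal (∑ i, ‖Ap (φ i)‖ ^ 2) =
      ∫⁻ l, ENNReal.ofReal (|l| ^ (2 * p)) ∂ν := by
    rw [lintegral_finsetSum_measure, ENNReal.ofReal_sum_of_nonneg fun i _ => sq_nonneg _]
    exact Finset.sum_congr rfl fun i _ =>
      hAp _ (lintegral_abs_rpow_ne_top (by simp [hμ_univ]) (hfin i) hp0 hp1)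
  have hA_sum : ENNReal.ofReal (∑ i, ‖A (φ i)‖ ^ 2) = ∫⁻ l, ENNReal.ofReal (l ^ 2) ∂ν := by
    rw [lintegral_finsetSum_measure, ENNReal.ofReal_sum_of_nonneg fun i _ => sq_nonneg _]
    exact Finset.sum_congr rfl fun i _ => hA _ (hfin i)
  rw [← hAp_sum, ← hA_sum, ENNReal.ofReal_rpow_of_nonneg (by positivity) hp0] at hJensen
  exact (ENNReal.ofReal_le_ofReal_iff (by positivity)).mp hJensen

end SpectralCalculus

section RelativeBounds

variable {H : Type*} [NormedAddCommGroup H] [InnerProductSpace ℂ H] {q : H → ℝ≥0∞}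
  {A B : H → H}

theorem SqrtBounded.sqrtInfinitesimal_of_forall_norm_sq_le (hA : SqrtBounded q A)
    (hBA : ∀ ε : ℝ, 0 < ε → ∃ C, 0 ≤ C ∧ ∀ φ : H, q φ ≠ ∞ →
      ‖B φ‖ ^ 2 ≤ C * ‖φ‖ ^ 2 + ε * ‖A φ‖ ^ 2) :
    SqrtInfinitesimal q B := by
  intro b hb
  obtain ⟨a₀, b₀, -, -, hA⟩ := hA
  set ε := b ^ 2 / (b₀ ^ 2 + 1)
  have hε : 0 < ε := by positivity
  have hεb : ε * b₀ ^ 2 ≤ b ^ 2 := by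
    rw [div_mul_eq_mul_div, div_le_iff₀ (by positivity)]
    nlinarith [sq_nonneg b, sq_nonneg b₀]
  obtain ⟨C, hC, hB⟩ := hBA ε hε
  refine ⟨√(C + ε * a₀ ^ 2), Real.sqrt_nonneg _, fun φ hφ => ?_⟩
  calc ENNReal.ofReal (‖B φ‖ ^ 2)
      ≤ ENNReal.ofReal C * ENNReal.ofReal (‖φ‖ ^ 2) +
          ENNReal.ofReal ε * ENNReal.ofReal (‖A φ‖ ^ 2) := by
        rw [← ENNReal.ofReal_mul hC, ← ENNReal.ofReal_mul hε.le,
          ← ENNReal.ofReal_add (by positivity) (by positivity)]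
        exact ENNReal.ofReal_le_ofReal (hB φ hφ)
    _ ≤ ENNReal.ofReal C * ENNReal.ofReal (‖φ‖ ^ 2) + ENNReal.ofReal ε *
          (ENNReal.ofReal (a₀ ^ 2) * ENNReal.ofReal (‖φ‖ ^ 2) +
            ENNReal.ofReal (b₀ ^ 2) * q φ) := by
        gcongr
        exact hA φ hφ
    _ = ENNReal.ofReal (C + ε * a₀ ^ 2) * ENNReal.ofReal (‖φ‖ ^ 2) +
          ENNReal.ofReal (ε * b₀ ^ 2) * q φ := by
        rw [ENNReal.ofReal_add hC (by positivity), ENNReal.ofReal_mul hε.le,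
          ENNReal.ofReal_mul hε.le]
        ring
    _ ≤ ENNReal.ofReal (√(C + ε * a₀ ^ 2) ^ 2) * ENNReal.ofReal (‖φ‖ ^ 2) +
          ENNReal.ofReal (b ^ 2) * q φ := by
        rw [Real.sq_sqrt (by positivity)]
        gcongr

theorem eNorm_le_rpow_of_forall_sum_norm_sq_le {p : ℝ} (hp : 0 ≤ p) (E : ℝ)
    (hBA : ∀ (n : ℕ) (φ : Fin n → H), ∑ i, ‖φ i‖ ^ 2 = 1 → (∀ i, q (φ i) ≠ ∞) →
      ∑ i, ‖B (φ i)‖ ^ 2 ≤ (∑ i, ‖A (φ i)‖ ^ 2) ^ p) :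
    eNorm q B E ≤ eNorm q A E ^ p := by
  refine iSup_le fun n => iSup_le fun φ => iSup_le fun hφ => iSup_le fun hE => ?_
  have hq : ∀ i, q (φ i) ≠ ∞ := fun i =>
    ne_top_of_le_ne_top ENNReal.ofReal_ne_top
      ((Finset.single_le_sum (fun j _ => zero_le) (Finset.mem_univ i)).trans hE)
  have hA_le : ENNReal.ofReal √(∑ i, ‖A (φ i)‖ ^ 2) ≤ eNorm q A E :=
    le_iSup_of_le n (le_iSup_of_le φ (le_iSup_of_le hφ (le_iSup_of_le hE le_rfl)))
  calc ENNReal.ofReal √(∑ i, ‖B (φ i)‖ ^ 2)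
      ≤ ENNReal.ofReal √((∑ i, ‖A (φ i)‖ ^ 2) ^ p) := by gcongr; exact hBA n φ hφ hq
    _ = ENNReal.ofReal √(∑ i, ‖A (φ i)‖ ^ 2) ^ p := by
        rw [ENNReal.ofReal_rpow_of_nonneg (Real.sqrt_nonneg _) hp, Real.sqrt_eq_rpow,
          Real.sqrt_eq_rpow, ← Real.rpow_mul (by positivity), ← Real.rpow_mul (by positivity),
          mul_comm]
    _ ≤ eNorm q A E ^ p := by gcongr

end RelativeBounds

theorem pow_sqrtG_infinitesimal_of_sqrtG_bounded_general
    {H : Type} [NormedAddCommGroup H] [InnerProductSpace ℂ H]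
    (G : PosForm H)
    (μ : H → MeasureTheory.Measure ℝ)
    (hμ_univ : ∀ φ : H, μ φ Set.univ = ENNReal.ofReal (‖φ‖ ^ 2))
    (A : H → H)
    (hA : ∀ φ : H, (∫⁻ l, ENNReal.ofReal (l ^ 2) ∂(μ φ)) ≠ ∞ →
      ENNReal.ofReal (‖A φ‖ ^ 2) = ∫⁻ l, ENNReal.ofReal (l ^ 2) ∂(μ φ))
    (hdom : ∀ φ : H, G.q φ ≠ ∞ → (∫⁻ l, ENNReal.ofReal (l ^ 2) ∂(μ φ)) ≠ ∞)
    (hbound : SqrtBounded G.q A)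
    (p : ℝ) (hp0 : 0 ≤ p) (hp1 : p < 1)
    (Ap : H → H)
    (hAp : ∀ φ : H, (∫⁻ l, ENNReal.ofReal (|l| ^ (2 * p)) ∂(μ φ)) ≠ ∞ →
      ENNReal.ofReal (‖Ap φ‖ ^ 2) = ∫⁻ l, ENNReal.ofReal (|l| ^ (2 * p)) ∂(μ φ)) :
    SqrtInfinitesimal G.q Ap ∧
      ∀ E : ℝ, 0 < E → eNorm G.q Ap E ≤ (eNorm G.q A E) ^ p := by
  refine ⟨hbound.sqrtInfinitesimal_of_forall_norm_sq_le fun ε hε => ?_,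
    fun E _ => eNorm_le_rpow_of_forall_sum_norm_sq_le hp0 E fun n φ hφ hq => ?_⟩
  · obtain ⟨C, hC, hle⟩ :=
      exists_norm_sq_le_add_mul_of_isSpectralMultiplier hμ_univ hA hAp hp0 hp1 hε
    exact ⟨C, hC, fun φ hφ => hle φ (hdom φ hφ)⟩
  · exact sum_norm_sq_le_rpow_of_isSpectralMultiplier hμ_univ hA hAp hp0 hp1.le φ hφ
      fun i => hdom _ (hq i)

/-- Lemma 5.  Let `A` be a self-adjoint operator (encoded by
the family `μ` of its diagonal spectral measures, `μ φ = ⟨φ, P_A(·) φ⟩`) which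
is `√G`-bounded.  Then for `p ∈ [0,1)` the operator `|A|^p` (given by the
spectral calculus of `A`, so that `‖|A|^p φ‖² = ∫ |λ|^{2p} dμ_φ`) is
`√G`-infinitesimal and `‖A^p‖^G_E ≤ (‖A‖^G_E)^p` for all `E > 0`. -/
theorem pow_sqrtG_infinitesimal_of_sqrtG_bounded
    {H : Type} [NormedAddCommGroup H] [InnerProductSpace ℂ H] [CompleteSpace H]
    [TopologicalSpace.SeparableSpace H]
    (hinf : ¬ FiniteDimensional ℂ H)
    (G : PosForm H)
    (hG0 : ∀ ε : ℝ, 0 < ε → ∃ φ : H, ‖φ‖ = 1 ∧ G.q φ < ENNReal.ofReal ε)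
    (μ : H → MeasureTheory.Measure ℝ)
    (hμ_univ : ∀ φ : H, μ φ Set.univ = ENNReal.ofReal (‖φ‖ ^ 2))
    (hμ_smul : ∀ (c : ℂ) (φ : H) (s : Set ℝ),
      μ (c • φ) s = ENNReal.ofReal (‖c‖ ^ 2) * μ φ s)
    (hμ_par : ∀ (φ ψ : H) (s : Set ℝ), MeasurableSet s →
      μ (φ + ψ) s + μ (φ - ψ) s = 2 * μ φ s + 2 * μ ψ s)
    (A : H → H)
    (hA : ∀ φ : H, (∫⁻ l, ENNReal.ofReal (l ^ 2) ∂(μ φ)) ≠ ∞ →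
      ENNReal.ofReal (‖A φ‖ ^ 2) = ∫⁻ l, ENNReal.ofReal (l ^ 2) ∂(μ φ))
    (hdom : ∀ φ : H, G.q φ ≠ ∞ → (∫⁻ l, ENNReal.ofReal (l ^ 2) ∂(μ φ)) ≠ ∞)
    (hbound : SqrtBounded G.q A)
    (p : ℝ) (hp0 : 0 ≤ p) (hp1 : p < 1)
    (Ap : H → H)
    (hAp : ∀ φ : H, (∫⁻ l, ENNReal.ofReal (|l| ^ (2 * p)) ∂(μ φ)) ≠ ∞ →
      ENNReal.ofReal (‖Ap φ‖ ^ 2) = ∫⁻ l, ENNReal.ofReal (|l| ^ (2 * p)) ∂(μ φ)) :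
    SqrtInfinitesimal G.q Ap ∧
      ∀ E : ℝ, 0 < E → eNorm G.q Ap E ≤ (eNorm G.q A E) ^ p :=
  pow_sqrtG_infinitesimal_of_sqrtG_bounded_general G μ hμ_univ A hA hdom hbound p hp0 hp1 Ap hAp

end
end

section
/- Let A be a self-adjoint operator on H with D(√G) ⊆ D(A). If Tr ρA² is finite for every state ρ with finite energy Tr ρG, then the operator A is √G-bounded. -/
/-! # Common infrastructure for formalizing
"Energy-constrained diamond norms and quantum dynamical semigroups"
(Shirokov–Holevo).

Trace-class operators on a Hilbert space `H` are modelled as bounded operators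
with finite trace norm, the trace norm being given by its variational
characterization over finite orthonormal systems.  Unbounded positive operators
`G` are modelled through their quadratic forms `φ ↦ ‖√G φ‖²` (with value `∞`
off the form domain); discrete operators are given concretely by an
orthonormal eigenbasis and eigenvalues.  The Hilbert tensor product
`H_A ⊗ H_R` is modelled by a Hilbert space `HAR` together with a bilinear map
satisfying the characteristic inner-product identity and totality. -/

noncomputable section

open scoped ENNReal
open ContinuousLinearMap MeasureTheory Filter Topology

/-! If `A` is not `√G`-bounded, then for every `n` some `φ` in the form domain has
`‖Aφ‖² > 2ⁿ (‖φ‖² + ‖√G φ‖²)`; by homogeneity we may rescale it to `ψₙ` with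
`‖Aψₙ‖ = 1` and `‖ψₙ‖² + ‖√G ψₙ‖² ≤ 2⁻ⁿ`. The operator `ρ = ∑ₙ |ψₙ⟩⟨ψₙ|`, rescaled to
unit trace, is then a state of finite energy with `Tr ρA² = ∞`. -/

lemma PosForm.q_zero {H : Type*} [NormedAddCommGroup H] [InnerProductSpace ℂ H]
    (G : PosForm H) : G.q 0 = 0 := by
  simpa using G.q_smul 0 0

lemma ofReal_sq_norm_smul {H : Type*} [NormedAddCommGroup H] [InnerProductSpace ℂ H]
    (c : ℂ) (φ : H) :
    ENNReal.ofReal (‖c • φ‖ ^ 2) = ENNReal.ofReal (‖c‖ ^ 2) * ENNReal.ofReal (‖φ‖ ^ 2) := by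
  rw [norm_smul, mul_pow, ENNReal.ofReal_mul (by positivity)]

section SqrtBounded

variable {H : Type*} [NormedAddCommGroup H] [InnerProductSpace ℂ H] {G : PosForm H} {A : H → H}

lemma exists_norm_map_eq_one_of_not_sqrtRelBoundWith
    (hsmul : ∀ (c : ℂ) (φ : H), G.q φ ≠ ∞ → A (c • φ) = c • A φ) {a : ℝ}
    (h : ¬ SqrtRelBoundWith G.q A a a) :
    ∃ ψ : H, G.q ψ ≠ ∞ ∧ ‖A ψ‖ = 1 ∧
      ENNReal.ofReal (a ^ 2) * (ENNReal.ofReal (‖ψ‖ ^ 2) + G.q ψ) < 1 := by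
  simp only [SqrtRelBoundWith, not_forall, not_le, exists_prop] at h
  obtain ⟨φ, hφq, hφ⟩ := h
  rw [← mul_add] at hφ
  have hAφ : 0 < ‖A φ‖ :=
    (norm_nonneg _).lt_of_ne' (sq_pos_iff.mp (ENNReal.ofReal_pos.mp (pos_of_gt hφ)))
  set c : ℂ := ((‖A φ‖⁻¹ : ℝ) : ℂ)
  have hc : ENNReal.ofReal (‖c‖ ^ 2) * ENNReal.ofReal (‖A φ‖ ^ 2) = 1 := by
    rw [← ENNReal.ofReal_mul (by positivity), Complex.norm_real, Real.norm_eq_abs, sq_abs,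
      ← mul_pow, inv_mul_cancel₀ hAφ.ne', one_pow, ENNReal.ofReal_one]
  have hc0 : ENNReal.ofReal (‖c‖ ^ 2) ≠ 0 := by
    rintro h; simp [h] at hc
  refine ⟨c • φ, by rw [G.q_smul]; exact ENNReal.mul_ne_top ENNReal.ofReal_ne_top hφq, ?_, ?_⟩
  · rw [hsmul c φ hφq, norm_smul, Complex.norm_real, Real.norm_eq_abs,
      abs_of_pos (inv_pos.mpr hAφ), inv_mul_cancel₀ hAφ.ne']
  · rw [ofReal_sq_norm_smul, G.q_smul, ← mul_add, mul_left_comm, ← hc]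
    exact ENNReal.mul_lt_mul_right hc0 ENNReal.ofReal_ne_top hφ

lemma exists_seq_norm_map_eq_one_of_not_sqrtBounded
    (hsmul : ∀ (c : ℂ) (φ : H), G.q φ ≠ ∞ → A (c • φ) = c • A φ)
    (h : ¬ SqrtBounded G.q A) :
    ∃ ψ : ℕ → H, (∀ n, ‖A (ψ n)‖ = 1) ∧ ∀ n, ENNReal.ofReal (‖ψ n‖ ^ 2) + G.q (ψ n) ≤ 2⁻¹ ^ n := by
  have hunb (n : ℕ) : ¬ SqrtRelBoundWith G.q A √(2 ^ n) √(2 ^ n) := fun hb =>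
    h ⟨_, _, Real.sqrt_nonneg _, Real.sqrt_nonneg _, hb⟩
  choose ψ _ hAψ hψ using fun n =>
    exists_norm_map_eq_one_of_not_sqrtRelBoundWith hsmul (hunb n)
  refine ⟨ψ, hAψ, fun n => ?_⟩
  have h2 : ENNReal.ofReal (√(2 ^ n) ^ 2) = 2 ^ n := by
    rw [Real.sq_sqrt (by positivity), ENNReal.ofReal_pow zero_le_two, ENNReal.ofReal_ofNat]
  rw [← ENNReal.inv_pow, ENNReal.le_inv_iff_mul_le, mul_comm, ← h2]
  exact (hψ n).le

lemma tsum_ofReal_sq_norm_map_ne_top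
    (hsmul : ∀ (c : ℂ) (φ : H), G.q φ ≠ ∞ → A (c • φ) = c • A φ)
    (hfin : ∀ φ : ℕ → H, (∑' i, ENNReal.ofReal (‖φ i‖ ^ 2)) = 1 →
      (∑' i, G.q (φ i)) ≠ ∞ → (∑' i, ENNReal.ofReal (‖A (φ i)‖ ^ 2)) ≠ ∞)
    {ψ : ℕ → H} (hnorm : (∑' i, ENNReal.ofReal (‖ψ i‖ ^ 2)) ≠ ∞)
    (henergy : (∑' i, G.q (ψ i)) ≠ ∞) :
    (∑' i, ENNReal.ofReal (‖A (ψ i)‖ ^ 2)) ≠ ∞ := by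
  set s := ∑' i, ENNReal.ofReal (‖ψ i‖ ^ 2)
  by_cases hs : s = 0
  · have hψ0 (i : ℕ) : ψ i = 0 := by
      simpa using ENNReal.tsum_eq_zero.mp hs i
    have hA0 : A 0 = 0 := by
      simpa using hsmul 0 0 (by rw [G.q_zero]; exact ENNReal.zero_ne_top)
    simp [hψ0, hA0]
  set c : ℂ := (((√s.toReal)⁻¹ : ℝ) : ℂ)
  have hc : ENNReal.ofReal (‖c‖ ^ 2) = s⁻¹ := by
    rw [Complex.norm_real, Real.norm_eq_abs, sq_abs, inv_pow,
      Real.sq_sqrt ENNReal.toReal_nonneg, ENNReal.ofReal_inv_of_pos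
        (ENNReal.toReal_pos hs hnorm), ENNReal.ofReal_toReal hnorm]
  have hAψ (i : ℕ) : A (c • ψ i) = c • A (ψ i) :=
    hsmul c _ (ENNReal.ne_top_of_tsum_ne_top henergy i)
  have hscaled := hfin (fun i => c • ψ i)
    (by
      simp only [ofReal_sq_norm_smul]
      rw [ENNReal.tsum_mul_left, hc, ENNReal.inv_mul_cancel hs hnorm])
    (by
      simp only [G.q_smul]
      rw [ENNReal.tsum_mul_left]
      exact ENNReal.mul_ne_top ENNReal.ofReal_ne_top henergy)
  simp only [hAψ, ofReal_sq_norm_smul] at hscaled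
  rw [ENNReal.tsum_mul_left, hc] at hscaled
  exact fun htop => hscaled (by rw [htop, ENNReal.mul_top (ENNReal.inv_ne_zero.mpr hnorm)])

end SqrtBounded

theorem sqrtG_bounded_of_finite_second_moment_general
    {H : Type} [NormedAddCommGroup H] [InnerProductSpace ℂ H] [CompleteSpace H]
    (G : PosForm H)
    (A : H → H)
    (hsmul : ∀ (c : ℂ) (φ : H), G.q φ ≠ ∞ → A (c • φ) = c • A φ)
    (hfin : ∀ φ : ℕ → H, (∑' i, ENNReal.ofReal (‖φ i‖ ^ 2)) = 1 →
      (∑' i, G.q (φ i)) ≠ ∞ → (∑' i, ENNReal.ofReal (‖A (φ i)‖ ^ 2)) ≠ ∞) :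
    SqrtBounded G.q A := by
  by_contra hnb
  obtain ⟨ψ, hAψ, hψ⟩ := exists_seq_norm_map_eq_one_of_not_sqrtBounded hsmul hnb
  have hweight : (∑' n, (ENNReal.ofReal (‖ψ n‖ ^ 2) + G.q (ψ n))) ≠ ∞ :=
    ne_top_of_le_ne_top (by rw [ENNReal.tsum_geometric_two]; exact ENNReal.ofNat_ne_top)
      (ENNReal.tsum_le_tsum hψ)
  rw [ENNReal.tsum_add, ENNReal.add_ne_top] at hweight
  apply tsum_ofReal_sq_norm_map_ne_top hsmul hfin hweight.1 hweight.2
  simp [hAψ]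

/-- Lemma 6.  If `A` is a self-adjoint operator with
`D(√G) ⊆ D(A)` such that `Tr ρ A² = ∑ᵢ ‖A φᵢ‖² < ∞` for every state
`ρ = ∑ᵢ |φᵢ⟩⟨φᵢ|` with finite energy `Tr ρ G = ∑ᵢ ‖√G φᵢ‖²`, then `A` is
`√G`-bounded. -/
theorem sqrtG_bounded_of_finite_second_moment
    {H : Type} [NormedAddCommGroup H] [InnerProductSpace ℂ H] [CompleteSpace H]
    [TopologicalSpace.SeparableSpace H]
    (hinf : ¬ FiniteDimensional ℂ H)
    (G : PosForm H)
    (hG0 : ∀ ε : ℝ, 0 < ε → ∃ φ : H, ‖φ‖ = 1 ∧ G.q φ < ENNReal.ofReal ε)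
    (A : H → H)
    (hadd : ∀ φ ψ : H, G.q φ ≠ ∞ → G.q ψ ≠ ∞ → A (φ + ψ) = A φ + A ψ)
    (hsmul : ∀ (c : ℂ) (φ : H), G.q φ ≠ ∞ → A (c • φ) = c • A φ)
    (hsym : ∀ φ ψ : H, G.q φ ≠ ∞ → G.q ψ ≠ ∞ →
      (inner ℂ (A φ) ψ : ℂ) = inner ℂ φ (A ψ))
    (hfin : ∀ φ : ℕ → H, (∑' i, ENNReal.ofReal (‖φ i‖ ^ 2)) = 1 →
      (∑' i, G.q (φ i)) ≠ ∞ → (∑' i, ENNReal.ofReal (‖A (φ i)‖ ^ 2)) ≠ ∞) :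
    SqrtBounded G.q A :=
  sqrtG_bounded_of_finite_second_moment_general G A hsmul hfin

end
end
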